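/- Let Γ be an infinite abelian group, let (R,S) be a sufficient pair of subsets of Γ (i.e., for every finite set E ⊂ Γ there exists γ ∈ Γ with -γ + E ⊂ R and γ + E ⊂ S, where finite sets play the role of compact sets in the discrete setting), and let A ⊂ Γ be finite. Then (R \ A, S \ A) is also a sufficient pair. -/

import Mathlib

/-!
The shifts `γ` for which `-γ + E` or `γ + E` meets `A` all lie in the finite set `(E - A) ∪ (A - E)`.
Applying sufficiency of `(R, S)` to `(-F + E) ∪ (F + E)` yields one `γ` such that every
`γ + b`, for `b` in a fixed finite set `F`, shifts `E` into `R` and `S`; taking `F` larger than the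
set of bad shifts, one of these `γ + b` also avoids `A`.
-/

section

open Finset Pointwise

variable {Γ : Type*} [AddCommGroup Γ]

def IsSufficientPair (R S : Set Γ) : Prop :=
  ∀ E : Finset Γ, ∃ γ : Γ, (∀ x ∈ E, -γ + x ∈ R) ∧ (∀ x ∈ E, γ + x ∈ S)

theorem IsSufficientPair.exists_forall_add [DecidableEq Γ] {R S : Set Γ}
    (h : IsSufficientPair R S) (F E : Finset Γ) :
    ∃ γ : Γ, ∀ b ∈ F, (∀ x ∈ E, -(γ + b) + x ∈ R) ∧ (∀ x ∈ E, γ + b + x ∈ S) := by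
  obtain ⟨γ, hR, hS⟩ := h (-F + E ∪ (F + E))
  refine ⟨γ, fun b hb => ⟨fun x hx => ?_, fun x hx => ?_⟩⟩
  · simpa only [neg_add, add_assoc] using
      hR (-b + x) (mem_union_left _ (add_mem_add (neg_mem_neg hb) hx))
  · simpa only [add_assoc] using hS (b + x) (mem_union_right _ (add_mem_add hb hx))

theorem neg_add_notMem_of_notMem_sub [DecidableEq Γ] {E A : Finset Γ} {γ x : Γ}
    (hγ : γ ∉ E - A) (hx : x ∈ E) : -γ + x ∉ A :=
  fun hA => hγ (by simpa using sub_mem_sub hx hA)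

theorem add_notMem_of_notMem_sub [DecidableEq Γ] {E A : Finset Γ} {γ x : Γ}
    (hγ : γ ∉ A - E) (hx : x ∈ E) : γ + x ∉ A :=
  fun hA => hγ (by simpa using sub_mem_sub hA hx)

theorem Finset.exists_add_notMem_of_card_lt {α : Type*} [Add α] [IsLeftCancelAdd α]
    {B F : Finset α} (h : #B < #F) (γ : α) : ∃ b ∈ F, γ + b ∉ B := by
  classical
  obtain ⟨c, hc, hcB⟩ := exists_mem_notMem_of_card_lt_card
    (h.trans_eq (card_image_of_injective F (add_right_injective γ)).symm)
  obtain ⟨b, hb, rfl⟩ := mem_image.1 hc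
  exact ⟨b, hb, hcB⟩

theorem IsSufficientPair.diff_finset [Infinite Γ] {R S : Set Γ} (h : IsSufficientPair R S)
    (A : Finset Γ) : IsSufficientPair (R \ (A : Set Γ)) (S \ (A : Set Γ)) := by
  classical
  intro E
  obtain ⟨F, hF⟩ := Infinite.exists_subset_card_eq Γ (#(E - A ∪ (A - E)) + 1)
  obtain ⟨γ, hγ⟩ := h.exists_forall_add F E
  obtain ⟨b, hb, hbad⟩ := exists_add_notMem_of_card_lt ((Nat.lt_succ_self _).trans_eq hF.symm) γ
  obtain ⟨hR, hS⟩ := hγ b hb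
  obtain ⟨hEA, hAE⟩ := not_or.1 (mt mem_union.2 hbad)
  exact ⟨γ + b, fun x hx => ⟨hR x hx, neg_add_notMem_of_notMem_sub hEA hx⟩,
    fun x hx => ⟨hS x hx, add_notMem_of_notMem_sub hAE hx⟩⟩

end

/-- If `(R, S)` is a sufficient pair in an infinite abelian group `Γ` and `A ⊆ Γ` is finite,
then `(R \ A, S \ A)` is also a sufficient pair. -/
theorem stmt_1 {Γ : Type*} [AddCommGroup Γ] [Infinite Γ]
    (R S : Set Γ)
    (hRS : ∀ E : Finset Γ, ∃ γ : Γ, (∀ x ∈ E, -γ + x ∈ R) ∧ (∀ x ∈ E, γ + x ∈ S))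
    (A : Finset Γ) :
    ∀ E : Finset Γ, ∃ γ : Γ,
      (∀ x ∈ E, -γ + x ∈ R \ (A : Set Γ)) ∧ (∀ x ∈ E, γ + x ∈ S \ (A : Set Γ)) :=
  IsSufficientPair.diff_finset hRS A
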